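/- arXiv:2408.00543 — 2 statements merged into one kernel-verified Lean document; each statement's English description precedes it below -/
import Mathlib

section
/- Let b > 0 and let B ∈ ℝ^{n×n} be symmetric positive definite with B ⪯ bI. Then for every x ∈ ℝⁿ, θ_B(x) ≤ −(1/(2b)) ‖d_SD(x)‖²; equivalently, d_B(x)ᵀ B d_B(x) ≥ ‖d_SD(x)‖² / b. -/
/-!
Both objectives have the form `d ↦ maxD f x d + q d / 2` with `maxD f x` positively homogeneous
of degree one and `q` of degree two, so restricting the minimality of a minimizer `d` to the
ray `t • d` forces `maxD f x d = -q d`. Hence `θ_B(x) = -quad B d_B / 2`, and comparing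
with the competitor `d_SD / b`, whose quadratic term is at most `‖d_SD‖² / b` because `B ⪯ b I`,
gives `θ_B(x) ≤ -‖d_SD‖² / (2b)`.
-/

open RealInnerProductSpace

noncomputable section

abbrev E (n : ℕ) := EuclideanSpace ℝ (Fin n)

def maxD {n m : ℕ} [NeZero m] (f : Fin m → E n → ℝ) (x d : E n) : ℝ :=
  Finset.univ.sup' Finset.univ_nonempty (fun i => ⟪gradient (f i) x, d⟫)

def quad {n : ℕ} (B : Matrix (Fin n) (Fin n) ℝ) (d : E n) : ℝ :=
  ∑ i, ∑ j, d i * B i j * d j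

lemma eq_neg_of_forall_le_smul {M q : ℝ}
    (h : ∀ t : ℝ, 0 ≤ t → M + q / 2 ≤ t * M + t ^ 2 * q / 2) : M = -q := by
  have h₀ := h 0 le_rfl
  have h₂ := h 2 zero_le_two
  rcases (show 0 ≤ q by linarith).eq_or_lt with hq | hq
  · subst hq
    linarith
  · -- the parabola `t ↦ t * M + t ^ 2 * q / 2` has its vertex at `1 - (M + q) / q`
    have hs : 0 ≤ 1 - (M + q) / q := by
      rw [sub_nonneg, div_le_one hq]
      linarith
    have hgap : (1 - (M + q) / q) * M + (1 - (M + q) / q) ^ 2 * q / 2 - (M + q / 2)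
        = -(M + q) ^ 2 / (2 * q) := by
      field_simp
      ring
    have : 0 ≤ -(M + q) ^ 2 / (2 * q) := by linarith [h _ hs]
    rw [le_div_iff₀ (by positivity), zero_mul, neg_nonneg] at this
    linarith [pow_eq_zero_iff two_ne_zero |>.mp (le_antisymm this (sq_nonneg _))]

section

variable {n m : ℕ} [NeZero m] (f : Fin m → E n → ℝ) (x : E n)

lemma maxD_smul {t : ℝ} (ht : 0 ≤ t) (d : E n) : maxD f x (t • d) = t * maxD f x d := by
  simp only [maxD, real_inner_smul_right]
  exact (Finset.apply_sup'_eq_sup'_comp _ (t * ·) fun a c => mul_max_of_nonneg a c ht).symm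

lemma maxD_eq_neg_of_forall_le {q : E n → ℝ} (hq : ∀ (t : ℝ) d, q (t • d) = t ^ 2 * q d)
    {d₀ : E n} (hmin : ∀ d, maxD f x d₀ + q d₀ / 2 ≤ maxD f x d + q d / 2) :
    maxD f x d₀ = -q d₀ := by
  refine eq_neg_of_forall_le_smul fun t ht => ?_
  have := hmin (t • d₀)
  rw [maxD_smul f x ht, hq] at this
  linarith

end

lemma norm_sq_smul {n : ℕ} (t : ℝ) (d : E n) : ‖t • d‖ ^ 2 = t ^ 2 * ‖d‖ ^ 2 := by
  rw [norm_smul, mul_pow, Real.norm_eq_abs, sq_abs]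

lemma quad_smul {n : ℕ} (B : Matrix (Fin n) (Fin n) ℝ) (t : ℝ) (d : E n) :
    quad B (t • d) = t ^ 2 * quad B d := by
  simp only [quad, Finset.mul_sum, PiLp.smul_apply, smul_eq_mul]
  exact Finset.sum_congr rfl fun i _ => Finset.sum_congr rfl fun j _ => by ring

lemma quad_eq_dotProduct {n : ℕ} (B : Matrix (Fin n) (Fin n) ℝ) (d : E n) :
    quad B d = dotProduct d.ofLp (B.mulVec d.ofLp) := by
  simp only [quad, dotProduct, Matrix.mulVec, Finset.mul_sum]
  exact Finset.sum_congr rfl fun i _ => Finset.sum_congr rfl fun j _ => by ring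

lemma quad_le_mul_norm_sq {n : ℕ} {B : Matrix (Fin n) (Fin n) ℝ} {b : ℝ}
    (hB : (b • (1 : Matrix (Fin n) (Fin n) ℝ) - B).PosSemidef) (d : E n) :
    quad B d ≤ b * ‖d‖ ^ 2 := by
  have h := hB.dotProduct_mulVec_nonneg d.ofLp
  simp only [Matrix.sub_mulVec, Matrix.smul_mulVec, Matrix.one_mulVec, dotProduct_sub,
    dotProduct_smul, smul_eq_mul, star_trivial, sub_nonneg] at h
  rwa [quad_eq_dotProduct, ← real_inner_self_eq_norm_sq, EuclideanSpace.inner_eq_star_dotProduct,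
    star_trivial]

theorem stmt15_general {n m : ℕ} [NeZero m] (f : Fin m → E n → ℝ)
    (b : ℝ) (hb : 0 < b)
    (B : Matrix (Fin n) (Fin n) ℝ)
    (hBup : ((b • (1 : Matrix (Fin n) (Fin n) ℝ)) - B).PosSemidef)
    (x dsd dB : E n) (θB : ℝ)
    (hdsd : ∀ d : E n, maxD f x dsd + ‖dsd‖ ^ 2 / 2 ≤ maxD f x d + ‖d‖ ^ 2 / 2)
    (hdB : ∀ d : E n, maxD f x dB + quad B dB / 2 ≤ maxD f x d + quad B d / 2)
    (hθ : θB = maxD f x dB + quad B dB / 2) :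
    θB ≤ -(1 / (2 * b)) * ‖dsd‖ ^ 2 ∧ ‖dsd‖ ^ 2 / b ≤ quad B dB := by
  have hSD := maxD_eq_neg_of_forall_le f x (q := (‖·‖ ^ 2)) norm_sq_smul hdsd
  have hθB : θB = -quad B dB / 2 := by
    rw [hθ, maxD_eq_neg_of_forall_le f x (quad_smul B) hdB]
    ring
  have hle : θB ≤ -(1 / (2 * b)) * ‖dsd‖ ^ 2 :=
    calc θB ≤ maxD f x (b⁻¹ • dsd) + quad B (b⁻¹ • dsd) / 2 := hθ ▸ hdB _
      _ = b⁻¹ * -‖dsd‖ ^ 2 + b⁻¹ ^ 2 * quad B dsd / 2 := by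
        rw [maxD_smul f x (inv_nonneg.mpr hb.le), quad_smul, hSD]
      _ ≤ b⁻¹ * -‖dsd‖ ^ 2 + b⁻¹ ^ 2 * (b * ‖dsd‖ ^ 2) / 2 := by
        gcongr
        exact quad_le_mul_norm_sq hBup dsd
      _ = -(1 / (2 * b)) * ‖dsd‖ ^ 2 := by
        field_simp
        ring
  refine ⟨hle, ?_⟩
  rw [hθB] at hle
  rw [div_le_iff₀ hb]
  field_simp at hle
  linarith

/-- θ_B(x) ≤ −‖d_SD(x)‖²/(2b) and d_B(x)ᵀ B d_B(x) ≥ ‖d_SD(x)‖²/b. -/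
theorem stmt15 {n m : ℕ} [NeZero m] (f : Fin m → E n → ℝ)
    (hf : ∀ i, ContDiff ℝ 1 (f i))
    (b : ℝ) (hb : 0 < b)
    (B : Matrix (Fin n) (Fin n) ℝ) (hB : B.PosDef)
    (hBup : ((b • (1 : Matrix (Fin n) (Fin n) ℝ)) - B).PosSemidef)
    (x dsd dB : E n) (θB : ℝ)
    (hdsd : ∀ d : E n, maxD f x dsd + ‖dsd‖ ^ 2 / 2 ≤ maxD f x d + ‖d‖ ^ 2 / 2)
    (hdB : ∀ d : E n, maxD f x dB + quad B dB / 2 ≤ maxD f x d + quad B d / 2)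
    (hθ : θB = maxD f x dB + quad B dB / 2) :
    θB ≤ -(1 / (2 * b)) * ‖dsd‖ ^ 2 ∧ ‖dsd‖ ^ 2 / b ≤ quad B dB :=
  stmt15_general f b hb B hBup x dsd dB θB hdsd hdB hθ
end
end

section
/- (Global convergence of MFQNMO) Suppose each f_i is continuously differentiable with ∇f_i Lipschitz continuous with constant L_i, and for every z ∈ ℝⁿ the level set {x : f_i(x) ≤ f_i(z) for all i} is bounded. Let 0 < σ₁ < σ₂ < 1, 0 < a ≤ b, and let (x_k), (d_k), (α_k), (B_k), (λ_k) satisfy for every k: B_k is symmetric with aI ⪯ B_k ⪯ bI; λ_k ∈ Δ_m minimizes λ ↦ ½ (Σ_i λ_i ∇f_i(x_k))ᵀ B_k^{-1} (Σ_i λ_i ∇f_i(x_k)) over Δ_m; d_k = −B_k^{-1} Σ_i λ_i^k ∇f_i(x_k) ≠ 0; x_{k+1} = x_k + α_k d_k with α_k satisfying the Wolfe conditions at (x_k, d_k); and B_{k+1} = B_k − (B_k s_k s_kᵀ B_k)/(s_kᵀ B_k s_k) + (γ_k γ_kᵀ)/(γ_kᵀ s_k), where s_k = x_{k+1} − x_k,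 y_k = Σ_i λ_i^k(∇f_i(x_{k+1}) − ∇f_i(x_k)), m_k = max(−y_kᵀs_k/‖s_k‖², 0) + Σ_i λ_i^k(f_i(x_k) − f_i(x_{k+1})), and γ_k = y_k + m_k s_k. Then: (i) liminf_{k→∞} ‖d_SD(x_k)‖ = 0, and (ii) every accumulation point of (x_k) is Pareto critical. -/
open RealInnerProductSpace

noncomputable section

def ParetoCritical {n m : ℕ} (f : Fin m → E n → ℝ) (x : E n) : Prop :=
  ∀ d : E n, ∃ i, 0 ≤ ⟪gradient (f i) x, d⟫

def mulVecE {n : ℕ} (B : Matrix (Fin n) (Fin n) ℝ) (v : E n) : E n :=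
  Matrix.toEuclideanLin B v

def outer {n : ℕ} (u v : E n) : Matrix (Fin n) (Fin n) ℝ :=
  Matrix.of fun i j => u i * v j

def bfgsUpdate {n : ℕ} (B : Matrix (Fin n) (Fin n) ℝ) (s γ : E n) :
    Matrix (Fin n) (Fin n) ℝ :=
  B - (quad B s)⁻¹ • (B * outer s s * B) + (⟪γ, s⟫)⁻¹ • outer γ γ

def yVec {n m : ℕ} (f : Fin m → E n → ℝ) (lam : Fin m → ℝ) (x x' : E n) : E n :=
  ∑ i, lam i • (gradient (f i) x' - gradient (f i) x)

def mScalar {n m : ℕ} (f : Fin m → E n → ℝ) (lam : Fin m → ℝ) (x x' : E n) : ℝ :=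
  max (-(⟪yVec f lam x x', x' - x⟫ / ‖x' - x‖ ^ 2)) 0 + ∑ i, lam i * (f i x - f i x')

def gammaVec {n m : ℕ} (f : Fin m → E n → ℝ) (lam : Fin m → ℝ) (x x' : E n) : E n :=
  yVec f lam x x' + mScalar f lam x x' • (x' - x)

/-!
Minimality of `λ_k` for the dual problem `min_{μ ∈ Δ_m} ½ ‖∑ μ_i ∇f_i(x_k)‖²_{B_k⁻¹}` gives
`⟪∇f_i(x_k), d_k⟫ ≤ -⟪B_k d_k, d_k⟫ ≤ -a ‖d_k‖²` for every `i`, so the `d_k` are uniformly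
descent directions. The sufficient-decrease condition and the bounded level set make
`∑ α_k (-D(x_k, d_k))` finite, while the curvature condition and the Lipschitz gradients force
`(1 - σ₂) a ≤ L α_k`; together `∑ ‖d_k‖² < ∞` (Zoutendijk). Hence
`g_k = ∑ λ_i^k ∇f_i(x_k) = -B_k d_k → 0`. Comparing `d_SD(x_k)` with `0` gives
`‖d_SD(x_k)‖ ≤ 2 ‖g_k‖`, and `D(x_k, d) ≥ ⟪g_k, d⟫` passes to the limit along a subsequence
converging to a cluster point.
-/

open Filter Topology Set Finset

theorem summable_of_le_sub_succ {u t : ℕ → ℝ} (hu : BddBelow (range u)) (ht : ∀ k, 0 ≤ t k)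
    (h : ∀ k, t k ≤ u k - u (k + 1)) : Summable t := by
  obtain ⟨c, hc⟩ := hu
  refine summable_of_sum_range_le ht (c := u 0 - c) fun K => ?_
  calc ∑ k ∈ range K, t k ≤ ∑ k ∈ range K, (u k - u (k + 1)) := sum_le_sum fun k _ => h k
    _ = u 0 - u K := sum_range_sub' u K
    _ ≤ u 0 - c := by linarith [hc (mem_range_self K)]

namespace LinearMap

variable {F : Type*} [NormedAddCommGroup F] [InnerProductSpace ℝ F] {T : F →ₗ[ℝ] F}

theorem IsPositive.inner_sq_le (hT : T.IsPositive) (x y : F) :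
    ⟪T x, y⟫ ^ 2 ≤ ⟪T x, x⟫ * ⟪T y, y⟫ := by
  have hsymm : ⟪T y, x⟫ = ⟪T x, y⟫ := by rw [hT.isSymmetric, real_inner_comm]
  have h := discrim_le_zero (a := ⟪T y, y⟫) (b := 2 * ⟪T x, y⟫) (c := ⟪T x, x⟫) fun t => by
    have := hT.inner_nonneg_left (x + t • y)
    simp only [map_add, map_smul, inner_add_left, inner_add_right, real_inner_smul_left,
      real_inner_smul_right, hsymm] at this
    linarith
  rw [discrim] at h
  linarith

theorem inner_le_of_le_smul_one {b : ℝ} (h : T ≤ b • 1) (x : F) : ⟪T x, x⟫ ≤ b * ‖x‖ ^ 2 := by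
  have := ((le_def _ _).1 h).inner_nonneg_left x
  simp only [sub_apply, smul_apply, Module.End.one_apply, inner_sub_left, real_inner_smul_left,
    real_inner_self_eq_norm_sq] at this
  linarith

theorem mul_norm_sq_le_inner_of_smul_one_le {a : ℝ} (h : a • 1 ≤ T) (x : F) :
    a * ‖x‖ ^ 2 ≤ ⟪T x, x⟫ := by
  have := ((le_def _ _).1 h).inner_nonneg_left x
  simp only [sub_apply, smul_apply, Module.End.one_apply, inner_sub_left, real_inner_smul_left,
    real_inner_self_eq_norm_sq] at this
  linarith

theorem norm_apply_le_of_le_smul_one (hT : 0 ≤ T) {b : ℝ} (h : T ≤ b • 1) (x : F) :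
    ‖T x‖ ≤ b * ‖x‖ := by
  rw [nonneg_iff_isPositive] at hT
  rcases eq_or_ne x 0 with rfl | hx
  · simp
  have hb : 0 ≤ b := nonneg_of_mul_nonneg_left
    ((hT.inner_nonneg_left x).trans (inner_le_of_le_smul_one h x)) (by positivity)
  have key : (‖T x‖ ^ 2) ^ 2 ≤ (b * ‖x‖ * ‖T x‖) ^ 2 := calc
    (‖T x‖ ^ 2) ^ 2 = ⟪T x, T x⟫ ^ 2 := by rw [real_inner_self_eq_norm_sq]
    _ ≤ ⟪T x, x⟫ * ⟪T (T x), T x⟫ := hT.inner_sq_le x (T x)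
    _ ≤ (b * ‖x‖ ^ 2) * (b * ‖T x‖ ^ 2) :=
      mul_le_mul (inner_le_of_le_smul_one h x) (inner_le_of_le_smul_one h (T x))
        (hT.inner_nonneg_left _) (by positivity)
    _ = (b * ‖x‖ * ‖T x‖) ^ 2 := by ring
  have := (pow_le_pow_iff_left₀ (by positivity) (by positivity) two_ne_zero).1 key
  nlinarith [mul_nonneg hb (norm_nonneg x)]

theorem IsPositive.inner_le_of_isMinOn (hT : T.IsPositive) {K : Set F} (hK : Convex ℝ K)
    {G y : F} (hG : G ∈ K) (hy : y ∈ K) (hmin : IsMinOn (fun z => ⟪T z, z⟫) K G) :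
    ⟪T G, G⟫ ≤ ⟪T G, y⟫ := by
  set w := y - G
  have hsymm : ⟪T w, G⟫ = ⟪T G, w⟫ := by rw [hT.isSymmetric, real_inner_comm]
  have hpos : ∀ t ∈ Ioc (0 : ℝ) 1, 0 ≤ 2 * ⟪T G, w⟫ + t * ⟪T w, w⟫ := fun t ht => by
    have : ⟪T G, G⟫ ≤ ⟪T (G + t • w), G + t • w⟫ :=
      isMinOn_iff.1 hmin _ (hK.add_smul_sub_mem hG hy (Ioc_subset_Icc_self ht))
    simp only [map_add, map_smul, inner_add_left, inner_add_right, real_inner_smul_left,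
      real_inner_smul_right, hsymm] at this
    nlinarith [ht.1]
  have hlim : Tendsto (fun t : ℝ => 2 * ⟪T G, w⟫ + t * ⟪T w, w⟫) (𝓝[>] 0)
      (𝓝 (2 * ⟪T G, w⟫ + 0 * ⟪T w, w⟫)) :=
    ((continuous_const.add (continuous_id.mul continuous_const)).tendsto 0).mono_left
      nhdsWithin_le_nhds
  have := ge_of_tendsto hlim (eventually_of_mem (Ioc_mem_nhdsGT one_pos) hpos)
  rw [inner_sub_right] at this
  linarith

theorem IsPositive.inner_le_of_isMinOn_stdSimplex (hT : T.IsPositive) {ι : Type*} [Fintype ι]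
    [DecidableEq ι] (v : ι → F) {lam : ι → ℝ} (hlam : lam ∈ stdSimplex ℝ ι)
    (hmin : ∀ μ ∈ stdSimplex ℝ ι, ⟪T (∑ i, lam i • v i), ∑ i, lam i • v i⟫ ≤
      ⟪T (∑ i, μ i • v i), ∑ i, μ i • v i⟫) (i : ι) :
    ⟪T (∑ i, lam i • v i), ∑ i, lam i • v i⟫ ≤ ⟪T (∑ i, lam i • v i), v i⟫ := by
  set C := Fintype.linearCombination ℝ v
  have hC : ∀ μ, C μ = ∑ i, μ i • v i := Fintype.linearCombination_apply ℝ v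
  refine hT.inner_le_of_isMinOn ((convex_stdSimplex ℝ ι).linear_image C)
    ⟨lam, hlam, hC lam⟩ ⟨_, single_mem_stdSimplex ℝ i, ?_⟩ ?_
  · rw [Fintype.linearCombination_apply_single, one_smul]
  · rintro _ ⟨μ, hμ, rfl⟩
    simpa only [mem_ofPred_eq, hC] using hmin μ hμ

end LinearMap

namespace Matrix

variable {ι : Type*} [DecidableEq ι] {A : Matrix ι ι ℝ}

theorem posDef_of_smul_one_le {a : ℝ} (ha : 0 < a) (h : (A - a • 1).PosSemidef) : A.PosDef := by
  simpa using PosDef.posSemidef_add h (PosDef.one.smul ha)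

variable [Fintype ι] {a : ℝ}

theorem smul_one_le_toEuclideanLin (h : (A - a • 1).PosSemidef) :
    a • 1 ≤ toEuclideanLin A := by
  rw [LinearMap.le_def, ← isPositive_toEuclideanLin_iff] at *
  simpa [Module.End.one_eq_id] using h

theorem toEuclideanLin_le_smul_one {b : ℝ} (h : (b • 1 - A).PosSemidef) :
    toEuclideanLin A ≤ b • 1 := by
  rw [LinearMap.le_def, ← isPositive_toEuclideanLin_iff] at *
  simpa [Module.End.one_eq_id] using h

theorem toEuclideanLin_apply_inv_apply (hA : IsUnit A) (v : EuclideanSpace ℝ ι) :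
    toEuclideanLin A (toEuclideanLin A⁻¹ v) = v := by
  rw [← LinearMap.comp_apply, ← toLpLin_mul_same,
    mul_nonsing_inv _ ((isUnit_iff_isUnit_det A).1 hA)]
  simp

theorem toEuclideanLin_eq_neg_of_eq_neg_inv (ha : 0 < a) (hA : (A - a • 1).PosSemidef)
    {d G : EuclideanSpace ℝ ι} (hd : d = -toEuclideanLin A⁻¹ G) : toEuclideanLin A d = -G := by
  rw [hd, map_neg, toEuclideanLin_apply_inv_apply (posDef_of_smul_one_le ha hA).isUnit]

theorem norm_le_mul_norm_of_eq_neg_inv (ha : 0 < a) (hA : (A - a • 1).PosSemidef) {b : ℝ}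
    (hAb : (b • 1 - A).PosSemidef) {d G : EuclideanSpace ℝ ι} (hd : d = -toEuclideanLin A⁻¹ G) :
    ‖G‖ ≤ b * ‖d‖ := by
  have hA0 : 0 ≤ toEuclideanLin A := (LinearMap.nonneg_iff_isPositive _).2 <|
    isPositive_toEuclideanLin_iff.2 (posDef_of_smul_one_le ha hA).posSemidef
  simpa [toEuclideanLin_eq_neg_of_eq_neg_inv ha hA hd] using
    LinearMap.norm_apply_le_of_le_smul_one hA0 (toEuclideanLin_le_smul_one hAb) d

end Matrix

theorem quad_eq_inner {n : ℕ} (A : Matrix (Fin n) (Fin n) ℝ) (u : E n) :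
    quad A u = ⟪Matrix.toEuclideanLin A u, u⟫ := by
  simp [quad, PiLp.inner_apply, Matrix.toLpLin_apply, Matrix.mulVec, dotProduct, Finset.mul_sum,
    mul_comm, mul_left_comm, mul_assoc]

section maxD

variable {n m : ℕ} [NeZero m] {f : Fin m → E n → ℝ}

theorem inner_gradient_le_maxD (i : Fin m) (x d : E n) : ⟪gradient (f i) x, d⟫ ≤ maxD f x d :=
  le_sup' (fun i => ⟪gradient (f i) x, d⟫) (mem_univ i)

theorem maxD_le_iff {x d : E n} {c : ℝ} : maxD f x d ≤ c ↔ ∀ i, ⟪gradient (f i) x, d⟫ ≤ c := by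
  simp [maxD]

theorem paretoCritical_iff {x : E n} : ParetoCritical f x ↔ ∀ d, 0 ≤ maxD f x d := by
  simp [ParetoCritical, maxD]

theorem maxD_zero_right (x : E n) : maxD f x 0 = 0 := by
  simp [maxD]

theorem inner_sum_smul_gradient_le_maxD {lam : Fin m → ℝ} (hlam : lam ∈ stdSimplex ℝ (Fin m))
    (x d : E n) : ⟪∑ i, lam i • gradient (f i) x, d⟫ ≤ maxD f x d := calc
  ⟪∑ i, lam i • gradient (f i) x, d⟫ = ∑ i, lam i * ⟪gradient (f i) x, d⟫ := by
    simp only [sum_inner, real_inner_smul_left]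
  _ ≤ ∑ i, lam i * maxD f x d :=
    sum_le_sum fun i _ => mul_le_mul_of_nonneg_left (inner_gradient_le_maxD i x d) (hlam.1 i)
  _ = maxD f x d := by rw [← sum_mul, hlam.2, one_mul]

theorem continuous_maxD_left (hcont : ∀ i, Continuous (gradient (f i))) (d : E n) :
    Continuous fun x => maxD f x d :=
  Continuous.finset_sup'_apply _ fun i _ => (hcont i).inner continuous_const

end maxD

section maxD

variable {n m : ℕ} [NeZero m] {f : Fin m → E n → ℝ}

theorem one_sub_mul_neg_maxD_le {L : NNReal} (hL : ∀ i, LipschitzWith L (gradient (f i)))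
    {x d : E n} {α σ : ℝ} (hα : 0 ≤ α) (hw : σ * maxD f x d ≤ maxD f (x + α • d) d) :
    (1 - σ) * -maxD f x d ≤ L * α * ‖d‖ ^ 2 := by
  obtain ⟨i, -, hi⟩ := exists_mem_eq_sup' univ_nonempty
    (fun i => ⟪gradient (f i) (x + α • d), d⟫)
  have hlip : ⟪gradient (f i) (x + α • d) - gradient (f i) x, d⟫ ≤ L * α * ‖d‖ ^ 2 := calc
    _ ≤ ‖gradient (f i) (x + α • d) - gradient (f i) x‖ * ‖d‖ := real_inner_le_norm _ _
    _ ≤ L * ‖(x + α • d) - x‖ * ‖d‖ := by gcongr; exact (hL i).norm_sub_le _ _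
    _ = L * α * ‖d‖ ^ 2 := by
      rw [add_sub_cancel_left, norm_smul, Real.norm_of_nonneg hα]; ring
  rw [inner_sub_left] at hlip
  linarith [hw.trans_eq hi, inner_gradient_le_maxD (f := f) i x d]

theorem maxD_le_of_quasiNewton {B : Matrix (Fin n) (Fin n) ℝ} {a : ℝ} (ha : 0 < a)
    (hB : (B - a • 1).PosSemidef) {lam : Fin m → ℝ} (hlam : lam ∈ stdSimplex ℝ (Fin m))
    {x d : E n} (hmin : ∀ μ ∈ stdSimplex ℝ (Fin m),
      quad B⁻¹ (∑ i, lam i • gradient (f i) x) / 2 ≤ quad B⁻¹ (∑ i, μ i • gradient (f i) x) / 2)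
    (hd : d = -(mulVecE B⁻¹ (∑ i, lam i • gradient (f i) x))) :
    maxD f x d ≤ -(a * ‖d‖ ^ 2) := by
  set G := ∑ i, lam i • gradient (f i) x
  set T := Matrix.toEuclideanLin B⁻¹
  have hT : T.IsPositive := Matrix.isPositive_toEuclideanLin_iff.2
    (Matrix.posDef_of_smul_one_le ha hB).posSemidef.inv
  have hopt := hT.inner_le_of_isMinOn_stdSimplex (fun i => gradient (f i) x) hlam
    fun μ hμ => by
      have := hmin μ hμ
      rw [quad_eq_inner, quad_eq_inner] at this
      linarith
  replace hd : d = -T G := hd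
  refine maxD_le_iff.2 fun i => ?_
  calc ⟪gradient (f i) x, d⟫ = -⟪T G, gradient (f i) x⟫ := by
        rw [hd, inner_neg_right, real_inner_comm]
    _ ≤ -⟪T G, G⟫ := neg_le_neg (hopt i)
    _ = -⟪Matrix.toEuclideanLin B d, d⟫ := by
        rw [Matrix.toEuclideanLin_eq_neg_of_eq_neg_inv ha hB hd, hd, inner_neg_left,
          inner_neg_right, neg_neg, real_inner_comm]
    _ ≤ -(a * ‖d‖ ^ 2) := neg_le_neg <|
        LinearMap.mul_norm_sq_le_inner_of_smul_one_le (Matrix.smul_one_le_toEuclideanLin hB) d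

theorem norm_le_two_mul_norm_of_forall_maxD_add_le {lam : Fin m → ℝ}
    (hlam : lam ∈ stdSimplex ℝ (Fin m)) {z v : E n}
    (hv : ∀ w, maxD f z v + ‖v‖ ^ 2 / 2 ≤ maxD f z w + ‖w‖ ^ 2 / 2) :
    ‖v‖ ≤ 2 * ‖∑ i, lam i • gradient (f i) z‖ := by
  set G := ∑ i, lam i • gradient (f i) z
  have h0 := hv 0
  rw [maxD_zero_right, norm_zero] at h0
  have hG := (neg_le_of_abs_le (abs_real_inner_le_norm G v)).trans
    (inner_sum_smul_gradient_le_maxD hlam z v)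
  have : ‖v‖ * ‖v‖ ≤ ‖v‖ * (2 * ‖G‖) := by nlinarith
  rcases (norm_nonneg v).eq_or_lt with h | h
  · rw [← h]; positivity
  · exact le_of_mul_le_mul_left this h

theorem paretoCritical_of_mapClusterPt (hcont : ∀ i, Continuous (gradient (f i)))
    {x : ℕ → E n} {lam : ℕ → Fin m → ℝ} (hlam : ∀ k, lam k ∈ stdSimplex ℝ (Fin m))
    (hG : Tendsto (fun k => ‖∑ i, lam k i • gradient (f i) (x k)‖) atTop (𝓝 0))
    {xs : E n} (hxs : MapClusterPt xs atTop x) : ParetoCritical f xs := by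
  refine paretoCritical_iff.2 fun d => ?_
  obtain ⟨ψ, hψ, hxψ⟩ := hxs.tendsto_subseq
  have hlim := (((continuous_maxD_left hcont d).tendsto xs).comp hxψ).add
    ((hG.comp hψ.tendsto_atTop).mul_const ‖d‖)
  rw [zero_mul, add_zero] at hlim
  refine ge_of_tendsto' hlim fun k => ?_
  have := (neg_le_of_abs_le (abs_real_inner_le_norm _ d)).trans
    (inner_sum_smul_gradient_le_maxD (f := f) (hlam (ψ k)) (x (ψ k)) d)
  simp only [Function.comp_apply]
  linarith

end maxD

section Wolfe

variable {n m : ℕ} [NeZero m] {f : Fin m → E n → ℝ} {L : NNReal}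

theorem one_sub_mul_sq_mul_norm_sq_le (hL : ∀ i, LipschitzWith L (gradient (f i)))
    {x d : E n} {α σ a : ℝ} (hα : 0 ≤ α) (hσ : σ ≤ 1) (ha : 0 ≤ a)
    (hdesc : maxD f x d ≤ -(a * ‖d‖ ^ 2)) (hw : σ * maxD f x d ≤ maxD f (x + α • d) d) :
    (1 - σ) * a ^ 2 * ‖d‖ ^ 2 ≤ L * (α * -maxD f x d) := by
  have hcurv := one_sub_mul_neg_maxD_le hL hα hw
  have hLα : 0 ≤ (L : ℝ) * α := mul_nonneg L.coe_nonneg hα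
  calc (1 - σ) * a ^ 2 * ‖d‖ ^ 2 = (1 - σ) * a * (a * ‖d‖ ^ 2) := by ring
    _ ≤ (1 - σ) * a * -maxD f x d :=
        mul_le_mul_of_nonneg_left (by linarith) (mul_nonneg (by linarith) ha)
    _ = a * ((1 - σ) * -maxD f x d) := by ring
    _ ≤ a * (L * α * ‖d‖ ^ 2) := mul_le_mul_of_nonneg_left hcurv ha
    _ = L * α * (a * ‖d‖ ^ 2) := by ring
    _ ≤ L * α * -maxD f x d := mul_le_mul_of_nonneg_left (by linarith) hLα
    _ = L * (α * -maxD f x d) := by ring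

theorem summable_norm_sq_of_wolfe (hf : ∀ i, Continuous (f i))
    (hL : ∀ i, LipschitzWith L (gradient (f i))) {x d : ℕ → E n} {α : ℕ → ℝ} {σ₁ σ₂ a : ℝ}
    (hlevel : Bornology.IsBounded {w | ∀ i, f i w ≤ f i (x 0)})
    (h1 : 0 < σ₁) (h2 : σ₂ < 1) (ha : 0 < a) (hα : ∀ k, 0 ≤ α k)
    (hx : ∀ k, x (k + 1) = x k + α k • d k)
    (hw1 : ∀ k i, f i (x k + α k • d k) ≤ f i (x k) + σ₁ * α k * maxD f (x k) (d k))
    (hw2 : ∀ k, σ₂ * maxD f (x k) (d k) ≤ maxD f (x k + α k • d k) (d k))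
    (hdesc : ∀ k, maxD f (x k) (d k) ≤ -(a * ‖d k‖ ^ 2)) :
    Summable fun k => ‖d k‖ ^ 2 := by
  have hdecrease : ∀ k i, σ₁ * (α k * -maxD f (x k) (d k)) ≤ f i (x k) - f i (x (k + 1)) := by
    intro k i
    rw [hx]
    linarith [hw1 k i]
  have hstep_nonneg : ∀ k, 0 ≤ σ₁ * (α k * -maxD f (x k) (d k)) := fun k =>
    mul_nonneg h1.le (mul_nonneg (hα k) (by nlinarith [hdesc k]))
  have hlev : ∀ k, x k ∈ {w | ∀ i, f i w ≤ f i (x 0)} := by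
    intro k
    induction k with
    | zero => exact fun i => le_rfl
    | succ k ih => exact fun i => by linarith [ih i, hdecrease k i, hstep_nonneg k]
  have hbdd : BddBelow (range fun k => f 0 (x k)) :=
    (hlevel.isCompact_closure.bddBelow_image (hf 0).continuousOn).mono <| by
      rintro _ ⟨k, rfl⟩
      exact mem_image_of_mem _ (subset_closure (hlev k))
  have hsum := summable_of_le_sub_succ hbdd hstep_nonneg fun k => hdecrease k 0
  have hc : 0 < (1 - σ₂) * a ^ 2 := by have := sub_pos.2 h2; positivity
  refine (summable_mul_left_iff hc.ne').1 <|
    (hsum.mul_left (L / σ₁)).of_nonneg_of_le (fun k => by positivity) fun k => ?_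
  rw [← mul_assoc, div_mul_cancel₀ _ h1.ne']
  exact one_sub_mul_sq_mul_norm_sq_le hL (hα k) h2.le ha.le (hdesc k) (hw2 k)

end Wolfe

theorem stmt16_general {n m : ℕ} [NeZero m] (f : Fin m → E n → ℝ)
    (hf : ∀ i, ContDiff ℝ 1 (f i))
    (L : Fin m → NNReal) (hL : ∀ i, LipschitzWith (L i) (fun z => gradient (f i) z))
    (hlevel : ∀ z : E n, Bornology.IsBounded {w : E n | ∀ i, f i w ≤ f i z})
    (σ₁ σ₂ : ℝ) (h1 : 0 < σ₁) (h2 : σ₂ < 1)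
    (a b : ℝ) (ha : 0 < a)
    (x d : ℕ → E n) (α : ℕ → ℝ) (B : ℕ → Matrix (Fin n) (Fin n) ℝ)
    (lam : ℕ → Fin m → ℝ)
    (hBlow : ∀ k, (B k - a • (1 : Matrix (Fin n) (Fin n) ℝ)).PosSemidef)
    (hBup : ∀ k, ((b • (1 : Matrix (Fin n) (Fin n) ℝ)) - B k).PosSemidef)
    (hlam : ∀ k, lam k ∈ stdSimplex ℝ (Fin m))
    (hlammin : ∀ k, ∀ μ ∈ stdSimplex ℝ (Fin m),
      quad (B k)⁻¹ (∑ i, lam k i • gradient (f i) (x k)) / 2 ≤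
        quad (B k)⁻¹ (∑ i, μ i • gradient (f i) (x k)) / 2)
    (hd : ∀ k, d k = -(mulVecE (B k)⁻¹ (∑ i, lam k i • gradient (f i) (x k))))
    (hα : ∀ k, 0 < α k) (hx : ∀ k, x (k + 1) = x k + α k • d k)
    (hw1 : ∀ k, ∀ i, f i (x k + α k • d k) ≤ f i (x k) + σ₁ * α k * maxD f (x k) (d k))
    (hw2 : ∀ k, σ₂ * maxD f (x k) (d k) ≤ maxD f (x k + α k • d k) (d k))
    (dSD : E n → E n)
    (hdSD : ∀ z, ∀ dd : E n,
      maxD f z (dSD z) + ‖dSD z‖ ^ 2 / 2 ≤ maxD f z dd + ‖dd‖ ^ 2 / 2) :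
    Filter.liminf (fun k => ‖dSD (x k)‖) Filter.atTop = 0 ∧
    ∀ xs : E n, MapClusterPt xs Filter.atTop x → ParetoCritical f xs := by
  have hLip : ∀ i, LipschitzWith (univ.sup L) (gradient (f i)) := fun i =>
    (hL i).weaken (le_sup (mem_univ i))
  have hdesc : ∀ k, maxD f (x k) (d k) ≤ -(a * ‖d k‖ ^ 2) := fun k =>
    maxD_le_of_quasiNewton ha (hBlow k) (hlam k) (hlammin k) (hd k)
  have hsum := summable_norm_sq_of_wolfe (fun i => (hf i).continuous) hLip (hlevel (x 0)) h1 h2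
    ha (fun k => (hα k).le) hx hw1 hw2 hdesc
  have hd0 : Tendsto (fun k => ‖d k‖) atTop (𝓝 0) := by
    simpa [Function.comp_def] using (Real.continuous_sqrt.tendsto 0).comp hsum.tendsto_atTop_zero
  have hG0 : Tendsto (fun k => ‖∑ i, lam k i • gradient (f i) (x k)‖) atTop (𝓝 0) :=
    squeeze_zero (fun _ => norm_nonneg _)
      (fun k => Matrix.norm_le_mul_norm_of_eq_neg_inv ha (hBlow k) (hBup k) (hd k))
      (by simpa using hd0.const_mul b)
  refine ⟨?_, fun xs => paretoCritical_of_mapClusterPt (fun i => (hLip i).continuous) hlam hG0⟩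
  refine (squeeze_zero (fun _ => norm_nonneg _) (fun k => ?_)
    (by simpa using hG0.const_mul 2)).liminf_eq
  exact norm_le_two_mul_norm_of_forall_maxD_add_le (hlam k) (hdSD (x k))

/-- Global convergence of MFQNMO. -/
theorem stmt16 {n m : ℕ} [NeZero m] (f : Fin m → E n → ℝ)
    (hf : ∀ i, ContDiff ℝ 1 (f i))
    (L : Fin m → NNReal) (hL : ∀ i, LipschitzWith (L i) (fun z => gradient (f i) z))
    (hlevel : ∀ z : E n, Bornology.IsBounded {w : E n | ∀ i, f i w ≤ f i z})
    (σ₁ σ₂ : ℝ) (h1 : 0 < σ₁) (h12 : σ₁ < σ₂) (h2 : σ₂ < 1)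
    (a b : ℝ) (ha : 0 < a) (hab : a ≤ b)
    (x d : ℕ → E n) (α : ℕ → ℝ) (B : ℕ → Matrix (Fin n) (Fin n) ℝ)
    (lam : ℕ → Fin m → ℝ)
    (hsymm : ∀ k, (B k).IsSymm)
    (hBlow : ∀ k, (B k - a • (1 : Matrix (Fin n) (Fin n) ℝ)).PosSemidef)
    (hBup : ∀ k, ((b • (1 : Matrix (Fin n) (Fin n) ℝ)) - B k).PosSemidef)
    (hlam : ∀ k, lam k ∈ stdSimplex ℝ (Fin m))
    (hlammin : ∀ k, ∀ μ ∈ stdSimplex ℝ (Fin m),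
      quad (B k)⁻¹ (∑ i, lam k i • gradient (f i) (x k)) / 2 ≤
        quad (B k)⁻¹ (∑ i, μ i • gradient (f i) (x k)) / 2)
    (hd : ∀ k, d k = -(mulVecE (B k)⁻¹ (∑ i, lam k i • gradient (f i) (x k))))
    (hd0 : ∀ k, d k ≠ 0)
    (hα : ∀ k, 0 < α k) (hx : ∀ k, x (k + 1) = x k + α k • d k)
    (hw1 : ∀ k, ∀ i, f i (x k + α k • d k) ≤ f i (x k) + σ₁ * α k * maxD f (x k) (d k))
    (hw2 : ∀ k, σ₂ * maxD f (x k) (d k) ≤ maxD f (x k + α k • d k) (d k))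
    (hBrec : ∀ k, B (k + 1) =
      bfgsUpdate (B k) (x (k + 1) - x k) (gammaVec f (lam k) (x k) (x (k + 1))))
    (dSD : E n → E n)
    (hdSD : ∀ z, ∀ dd : E n,
      maxD f z (dSD z) + ‖dSD z‖ ^ 2 / 2 ≤ maxD f z dd + ‖dd‖ ^ 2 / 2) :
    Filter.liminf (fun k => ‖dSD (x k)‖) Filter.atTop = 0 ∧
    ∀ xs : E n, MapClusterPt xs Filter.atTop x → ParetoCritical f xs :=
  stmt16_general f hf L hL hlevel σ₁ σ₂ h1 h2 a b ha x d α B lam hBlow hBup hlam hlammin hd hα hx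
    hw1 hw2 dSD hdSD
end
end
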